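/- arXiv:1512.08225 — 6 statements merged into one kernel-verified Lean document; each statement's English description precedes it below -/
import Mathlib

section
/- The negative binomial output distributions of a quantum-limited amplifier satisfy a Fock-majorization ladder: for every k ≥ 0 and every n ≥ 0, Σ_{i=0}^n C(i+k,i) t^i (1-t)^{k+1} ≥ Σ_{i=0}^n C(i+k+1,i) t^i (1-t)^{k+2}, for all t ∈ [0,1). -/
/-!
By Pascal's rule the termwise difference of the two sums telescopes: it is `f (i + 1) - f i` for
`f i = C(i+k, k+1) t^i (1-t)^(k+1)`. Since `f 0 = 0`, the difference of the partial sums is the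
single term `f (n + 1)`, which is nonnegative for `t ∈ [0, 1]`.
-/

open Finset

theorem Nat.choose_add_add_one_right (i k : ℕ) :
    (i + k + 1).choose (k + 1) = (i + k).choose i + (i + k).choose (k + 1) := by
  rw [Nat.choose_succ_succ, Nat.choose_symm_add]

theorem sum_range_choose_mul_pow_sub_eq {R : Type*} [CommRing R] (t : R) (k n : ℕ) :
    ∑ i ∈ range (n + 1), (i + k).choose i * t ^ i * (1 - t) ^ (k + 1)
      - ∑ i ∈ range (n + 1), (i + k + 1).choose i * t ^ i * (1 - t) ^ (k + 2)
      = (n + k + 1).choose (k + 1) * t ^ (n + 1) * (1 - t) ^ (k + 1) := by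
  set f : ℕ → R := fun i => (i + k).choose (k + 1) * t ^ i * (1 - t) ^ (k + 1)
  have hf0 : f 0 = 0 := by simp [f]
  rw [← sum_sub_distrib, show (n + k + 1).choose (k + 1) * t ^ (n + 1) * (1 - t) ^ (k + 1)
    = f (n + 1) - f 0 by simp [hf0, f, add_right_comm n 1 k], ← sum_range_sub]
  refine sum_congr rfl fun i _ => ?_
  have hsymm : (i + k + 1).choose i = (i + k + 1).choose (k + 1) := by
    rw [add_assoc, Nat.choose_symm_add]
  simp only [f, add_right_comm i 1 k, hsymm, Nat.choose_add_add_one_right, Nat.cast_add]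
  ring

theorem amplifier_fock_majorization_ladder
    (t : ℝ) (ht0 : 0 ≤ t) (ht1 : t < 1) (k n : ℕ) :
    ∑ i ∈ Finset.range (n + 1),
        ((i + k + 1).choose i : ℝ) * t ^ i * (1 - t) ^ (k + 2)
      ≤ ∑ i ∈ Finset.range (n + 1),
        ((i + k).choose i : ℝ) * t ^ i * (1 - t) ^ (k + 1) := by
  have h1t : 0 ≤ 1 - t := by linarith
  rw [← sub_nonneg, sum_range_choose_mul_pow_sub_eq]
  positivity
end

section
/- Abstract passive-preservation theorem (discrete form): Let P : ℕ × ℕ → ℝ≥0 be a stochastic kernel with finite support in each row, and suppose the dual ladder condition holds: ∀ n, k: Σ_{i=0}^n P(i,k) ≥ Σ_{i=0}^n P(i,k+1). Then for every nonincreasing probability distribution r (r_k ≥ r_{k+1} ∀ k, finitely supported), the pushed-forward distribution q_k = Σ_i r_i P(i,k) is also nonincreasing: q_k ≥ q_{k+1} for all k. -/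
open scoped NNReal BigOperators

lemma abel_aux (N : ℕ) (r f : ℕ → ℝ) :
    ∑ i ∈ Finset.range (N + 1), r i * f i
      = ∑ n ∈ Finset.range (N + 1),
          (r n - r (n + 1)) * (∑ i ∈ Finset.range (n + 1), f i)
        + r (N + 1) * ∑ i ∈ Finset.range (N + 1), f i := by
  induction N with
  | zero => simp; ring
  | succ N ih =>
    rw [Finset.sum_range_succ, ih]
    rw [Finset.sum_range_succ (f := fun n =>
      (r n - r (n + 1)) * (∑ i ∈ Finset.range (n + 1), f i)) (n := N + 1),
      Finset.sum_range_succ (f := f) (n := N + 1)]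
    ring

theorem passive_preservation
    (P : ℕ × ℕ → ℝ≥0)
    (hrow_fin : ∀ i : ℕ, ∃ M : ℕ, ∀ j, M < j → P (i, j) = 0)
    (hrow_sum : ∀ i : ℕ, ∑' j : ℕ, P (i, j) = 1)
    (hdual : ∀ n k : ℕ,
      ∑ i ∈ Finset.range (n + 1), P (i, k + 1) ≤ ∑ i ∈ Finset.range (n + 1), P (i, k))
    (N : ℕ) (r : ℕ → ℝ≥0)
    (hmono : ∀ k : ℕ, r (k + 1) ≤ r k)
    (hrN : ∀ i, N < i → r i = 0)
    (hr1 : ∑ i ∈ Finset.range (N + 1), r i = 1) :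
    ∀ k : ℕ,
      ∑ i ∈ Finset.range (N + 1), r i * P (i, k + 1)
        ≤ ∑ i ∈ Finset.range (N + 1), r i * P (i, k) := by
  intro k
  rw [← NNReal.coe_le_coe]
  push_cast
  rw [abel_aux N (fun i => (r i : ℝ)) (fun i => (P (i, k + 1) : ℝ)),
    abel_aux N (fun i => (r i : ℝ)) (fun i => (P (i, k) : ℝ))]
  have hN1 : r (N + 1) = 0 := hrN _ (Nat.lt_succ_self N)
  rw [hN1]
  simp only [NNReal.coe_zero, zero_mul, add_zero]
  apply Finset.sum_le_sum
  intro n _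
  apply mul_le_mul_of_nonneg_left
  · have := hdual n k
    rw [← NNReal.coe_le_coe] at this
    push_cast at this
    exact this
  · have := hmono n
    rw [← NNReal.coe_le_coe] at this
    linarith
end

section
/- The Fock-majorization ladder holds for the composed loss-amplifier kernel: for any η ∈ [0,1] and t ∈ [0,1), the kernel M(i,n) obtained by composing the binomial kernel B(i,m) = C(i,m) η^m (1-η)^{i-m} with the shifted negative-binomial kernel A(m,n) = C(n, n−m) t^{n−m} (1-t)^{m+1} (for n ≥ m, zero otherwise) satisfies: ∀ k, n, Σ_{j=0}^n M(k,j) ≥ Σ_{j=0}^n M(k+1,j). -/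
/-!
Summing over the output first, the cumulative output of row `k` of the composed kernel is
`∑ₘ B(k, m) F(m, n)` with `F(m, n) = ∑_{j ≤ n} A(m, j)`. Pascal's rule gives
`F(m, n) - F(m + 1, n) = C(n + 1, m + 1) tⁿ⁻ᵐ (1 - t)ᵐ⁺¹ ≥ 0`, so `F` is antitone in `m`.
Pascal's rule also writes row `k + 1` of `B` as row `k` followed by one Bernoulli(η) step
`m ↦ m + 1`, which can only lower the average of an antitone function.
-/

open scoped BigOperators

open Finset

noncomputable def binomialKernel (η : ℝ) (k m : ℕ) : ℝ :=
  (k.choose m : ℝ) * η ^ m * (1 - η) ^ (k - m)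

noncomputable def negBinomialKernel (t : ℝ) (m j : ℕ) : ℝ :=
  if m ≤ j then (j.choose (j - m) : ℝ) * t ^ (j - m) * (1 - t) ^ (m + 1) else 0

noncomputable def negBinomialCDF (t : ℝ) (m n : ℕ) : ℝ :=
  ∑ j ∈ range (n + 1), negBinomialKernel t m j

theorem sum_binomialKernel_succ_mul (η : ℝ) (k : ℕ) (f : ℕ → ℝ) :
    ∑ m ∈ range (k + 2), binomialKernel η (k + 1) m * f m =
      ∑ m ∈ range (k + 1), binomialKernel η k m * (η * f (m + 1) + (1 - η) * f m) := by
  set g : ℕ → ℝ := fun m => (k.choose m : ℝ) * η ^ m * (1 - η) ^ (k + 1 - m) * f m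
  have hshift (m : ℕ) : binomialKernel η (k + 1) (m + 1) * f (m + 1) =
      binomialKernel η k m * (η * f (m + 1)) + g (m + 1) := by
    simp only [binomialKernel, g, Nat.choose_succ_succ, Nat.reduceSubDiff, Nat.cast_add]
    ring
  have hg : ∑ m ∈ range (k + 2), g m = ∑ m ∈ range (k + 1), binomialKernel η k m * ((1 - η) * f m) := by
    rw [sum_range_succ, show g (k + 1) = 0 by simp [g], add_zero]
    refine sum_congr rfl fun m hm => ?_
    simp only [g, binomialKernel]
    rw [Nat.sub_add_comm (mem_range_succ_iff.mp hm), pow_succ]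
    ring
  rw [sum_range_succ', sum_congr rfl fun m _ => hshift m, sum_add_distrib, add_assoc]
  have h0 : binomialKernel η (k + 1) 0 * f 0 = g 0 := by simp [binomialKernel, g]
  rw [h0, ← sum_range_succ' g, hg, ← sum_add_distrib]
  simp only [mul_add]

theorem sum_binomialKernel_succ_le {η : ℝ} (hη0 : 0 ≤ η) (hη1 : η ≤ 1) {f : ℕ → ℝ}
    (hf : Antitone f) (k : ℕ) :
    ∑ m ∈ range (k + 2), binomialKernel η (k + 1) m * f m ≤
      ∑ m ∈ range (k + 1), binomialKernel η k m * f m := by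
  rw [sum_binomialKernel_succ_mul]
  refine sum_le_sum fun m _ => mul_le_mul_of_nonneg_left ?_ ?_
  · nlinarith [hf m.le_succ]
  · unfold binomialKernel
    have := sub_nonneg.mpr hη1
    positivity

theorem negBinomialKernel_succ_add (t : ℝ) (m n : ℕ) :
    ((n + 1).choose (m + 1) : ℝ) * t ^ (n - m) * (1 - t) ^ (m + 1) + negBinomialKernel t m (n + 1) =
      negBinomialKernel t (m + 1) (n + 1) +
        ((n + 2).choose (m + 1) : ℝ) * t ^ (n + 1 - m) * (1 - t) ^ (m + 1) := by
  unfold negBinomialKernel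
  rcases lt_trichotomy m (n + 1) with h | rfl | h
  · rw [if_pos h.le, if_pos (Nat.succ_le_of_lt h), Nat.add_sub_add_right, Nat.choose_symm h.le,
      Nat.choose_symm_of_eq_add (by omega : n + 1 = n - m + (m + 1)), Nat.choose_succ_succ (n + 1),
      Nat.sub_add_comm (Nat.lt_succ_iff.mp h)]
    push_cast
    ring
  · simp [Nat.choose_succ_self]
  · rw [if_neg h.not_ge, if_neg (by omega), Nat.choose_eq_zero_of_lt (by omega),
      Nat.choose_eq_zero_of_lt (by omega)]
    simp

theorem negBinomialCDF_succ (t : ℝ) (m n : ℕ) :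
    negBinomialCDF t m (n + 1) = negBinomialCDF t m n + negBinomialKernel t m (n + 1) :=
  sum_range_succ _ _

theorem negBinomialCDF_eq_succ_add (t : ℝ) (m n : ℕ) :
    negBinomialCDF t m n =
      negBinomialCDF t (m + 1) n + ((n + 1).choose (m + 1) : ℝ) * t ^ (n - m) * (1 - t) ^ (m + 1) := by
  induction n with
  | zero => cases m <;> simp [negBinomialCDF, negBinomialKernel, Nat.choose_eq_zero_iff]
  | succ n ih =>
    rw [negBinomialCDF_succ, ih, add_assoc, negBinomialKernel_succ_add, negBinomialCDF_succ,
      add_assoc]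

theorem negBinomialCDF_antitone {t : ℝ} (ht0 : 0 ≤ t) (ht1 : t ≤ 1) (n : ℕ) :
    Antitone fun m => negBinomialCDF t m n := by
  refine antitone_nat_of_succ_le fun m => ?_
  rw [negBinomialCDF_eq_succ_add t m n, le_add_iff_nonneg_right]
  have := sub_nonneg.mpr ht1
  positivity

theorem sum_comp_le_of_antitone {s s' : Finset ℕ} {p q : ℕ → ℝ} {A : ℕ → ℕ → ℝ}
    (hpq : ∀ f : ℕ → ℝ, Antitone f → ∑ m ∈ s, p m * f m ≤ ∑ m ∈ s', q m * f m)
    (hA : ∀ n, Antitone fun m => ∑ j ∈ range (n + 1), A m j) (n : ℕ) :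
    ∑ j ∈ range (n + 1), ∑ m ∈ s, p m * A m j ≤ ∑ j ∈ range (n + 1), ∑ m ∈ s', q m * A m j := by
  rw [sum_comm, sum_comm (s := range (n + 1))]
  simpa only [mul_sum] using hpq _ (hA n)

theorem composed_loss_amplifier_ladder
    (η t : ℝ) (hη0 : 0 ≤ η) (hη1 : η ≤ 1) (ht0 : 0 ≤ t) (ht1 : t < 1) :
    ∀ k n : ℕ,
      ∑ j ∈ Finset.range (n + 1),
          (∑ m ∈ Finset.range (k + 2),
            (((k + 1).choose m : ℝ) * η ^ m * (1 - η) ^ (k + 1 - m)) *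
              (if m ≤ j then (j.choose (j - m) : ℝ) * t ^ (j - m) * (1 - t) ^ (m + 1) else 0))
        ≤ ∑ j ∈ Finset.range (n + 1),
          (∑ m ∈ Finset.range (k + 1),
            ((k.choose m : ℝ) * η ^ m * (1 - η) ^ (k - m)) *
              (if m ≤ j then (j.choose (j - m) : ℝ) * t ^ (j - m) * (1 - t) ^ (m + 1) else 0)) :=
  fun k n =>
    sum_comp_le_of_antitone (p := binomialKernel η (k + 1)) (q := binomialKernel η k)
      (A := negBinomialKernel t) (fun _ hf => sum_binomialKernel_succ_le hη0 hη1 hf k)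
      (negBinomialCDF_antitone ht0 ht1.le) n
end

section
/- Passivity preservation for the binomial kernel: if r : ℕ → ℝ≥0 is a finitely supported nonincreasing probability distribution, then the pushed-forward distribution q_n = Σ_{k ≥ n} r_k C(k,n) η^n (1-η)^{k-n} is also nonincreasing in n, for any η ∈ [0,1]. -/
/-! Write `b k n = C(k,n) η^n (1-η)^(k-n)` for the binomial weights, so that the two sides are
`∑_k r_k b k (n+1)` and `∑_k r_k b k n`. By Abel summation against the nonincreasing `r` it is
enough to compare the partial sums `∑_{k ≤ m} b k (n+1) ≤ ∑_{k ≤ m} b k n`, and Pascal's rule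
gives `∑_{k ≤ m} b k n = ∑_{k ≤ m} b k (n+1) + C(m+1,n+1) η^n (1-η)^(m-n)`. -/

open scoped NNReal BigOperators

open Finset

section Abel

variable {R : Type*} [CommRing R] [LinearOrder R] [IsStrictOrderedRing R]

theorem sum_mul_le_sum_mul_of_antitone_of_sum_le {r u v : ℕ → R} (N : ℕ)
    (hr : ∀ k < N, r (k + 1) ≤ r k) (hrN : 0 ≤ r N)
    (huv : ∀ m ≤ N, ∑ k ∈ range (m + 1), u k ≤ ∑ k ∈ range (m + 1), v k) :
    ∑ k ∈ range (N + 1), r k * u k ≤ ∑ k ∈ range (N + 1), r k * v k := by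
  rw [← sub_nonneg, ← sum_sub_distrib]
  simp_rw [← mul_sub, ← smul_eq_mul]
  rw [sum_range_by_parts, Nat.add_sub_cancel]
  have hpartial : ∀ m ≤ N, 0 ≤ ∑ k ∈ range (m + 1), (v k - u k) := fun m hm => by
    rw [sum_sub_distrib, sub_nonneg]
    exact huv m hm
  refine sub_nonneg_of_le (le_trans ?_ (mul_nonneg hrN (hpartial N le_rfl)))
  refine sum_nonpos fun i hi => mul_nonpos_of_nonpos_of_nonneg ?_ ?_
  · exact sub_nonpos.mpr (hr i (mem_range.mp hi))
  · exact hpartial i (mem_range.mp hi).le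

end Abel

/-- For `k < n` the binomial coefficient vanishes, so the truncated subtraction `k - n` is harmless. -/
noncomputable def binomWeight (η : ℝ) (k n : ℕ) : ℝ :=
  k.choose n * η ^ n * (1 - η) ^ (k - n)

theorem sum_Icc_mul_binomWeight_eq_sum_range (f : ℕ → ℝ) (η : ℝ) (n N : ℕ) :
    ∑ k ∈ Icc n N, f k * binomWeight η k n = ∑ k ∈ range (N + 1), f k * binomWeight η k n := by
  refine sum_subset (fun k hk => mem_range.mpr (Nat.lt_succ_of_le (mem_Icc.mp hk).2)) ?_
  intro k hkN hkn
  have hk : k < n := by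
    by_contra! h
    exact hkn (mem_Icc.mpr ⟨h, Nat.le_of_lt_succ (mem_range.mp hkN)⟩)
  simp [binomWeight, Nat.choose_eq_zero_of_lt hk]

theorem sum_Icc_binomWeight_eq (η : ℝ) {n m : ℕ} (hnm : n ≤ m) :
    ∑ k ∈ Icc n m, binomWeight η k n
      = ∑ k ∈ Icc (n + 1) m, binomWeight η k (n + 1)
        + (m + 1).choose (n + 1) * η ^ n * (1 - η) ^ (m - n) := by
  induction m, hnm using Nat.le_induction with
  | base => simp [binomWeight]
  | succ m hnm ih =>
    rw [sum_Icc_succ_top (by omega), sum_Icc_succ_top (by omega), ih, Nat.choose_succ_succ' (m + 1)]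
    simp only [binomWeight, Nat.cast_add, show m + 1 - n = m - n + 1 by omega,
      show m + 1 - (n + 1) = m - n by omega]
    ring

theorem sum_range_binomWeight_succ_le {η : ℝ} (hη0 : 0 ≤ η) (hη1 : η ≤ 1) (n m : ℕ) :
    ∑ k ∈ range (m + 1), binomWeight η k (n + 1) ≤ ∑ k ∈ range (m + 1), binomWeight η k n := by
  have hIcc (j : ℕ) := sum_Icc_mul_binomWeight_eq_sum_range (fun _ => 1) η j m
  simp only [one_mul] at hIcc
  rw [← hIcc, ← hIcc]
  rcases le_or_gt n m with hnm | hmn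
  · rw [sum_Icc_binomWeight_eq η hnm, le_add_iff_nonneg_right]
    have : 0 ≤ 1 - η := sub_nonneg.mpr hη1
    positivity
  · simp [Icc_eq_empty_of_lt hmn, Icc_eq_empty_of_lt (Nat.lt_succ_of_lt hmn)]

theorem loss_channel_passive_preserving_general
    (η : ℝ) (hη0 : 0 ≤ η) (hη1 : η ≤ 1)
    (N : ℕ) (r : ℕ → ℝ≥0)
    (hmono : ∀ k : ℕ, r (k + 1) ≤ r k) :
    ∀ n : ℕ,
      ∑ k ∈ Finset.Icc (n + 1) N, (r k : ℝ) * (k.choose (n + 1)) * η ^ (n + 1) * (1 - η) ^ (k - (n + 1))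
        ≤ ∑ k ∈ Finset.Icc n N, (r k : ℝ) * (k.choose n) * η ^ n * (1 - η) ^ (k - n) := by
  intro n
  have hweight (j : ℕ) : ∑ k ∈ Icc j N, (r k : ℝ) * (k.choose j) * η ^ j * (1 - η) ^ (k - j)
      = ∑ k ∈ range (N + 1), (r k : ℝ) * binomWeight η k j := by
    rw [← sum_Icc_mul_binomWeight_eq_sum_range]
    simp only [binomWeight, mul_assoc]
  rw [hweight, hweight]
  exact sum_mul_le_sum_mul_of_antitone_of_sum_le N (fun k _ => mod_cast hmono k) (r N).2
    fun m _ => sum_range_binomWeight_succ_le hη0 hη1 n m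

theorem loss_channel_passive_preserving
    (η : ℝ) (hη0 : 0 ≤ η) (hη1 : η ≤ 1)
    (N : ℕ) (r : ℕ → ℝ≥0)
    (hmono : ∀ k : ℕ, r (k + 1) ≤ r k)
    (hrN : ∀ i, N < i → r i = 0)
    (hr1 : ∑ i ∈ Finset.range (N + 1), r i = 1) :
    ∀ n : ℕ,
      ∑ k ∈ Finset.Icc (n + 1) N, (r k : ℝ) * (k.choose (n + 1)) * η ^ (n + 1) * (1 - η) ^ (k - (n + 1))
        ≤ ∑ k ∈ Finset.Icc n N, (r k : ℝ) * (k.choose n) * η ^ n * (1 - η) ^ (k - n) :=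
  loss_channel_passive_preserving_general η hη0 hη1 N r hmono
end

section
/- Passivity preservation for the amplifier kernel: if r : ℕ → ℝ≥0 is a finitely supported nonincreasing probability distribution, then the pushed-forward distribution q_n = Σ_{k=0}^n r_k C(n,n−k) t^{n−k} (1-t)^{k+1} is nonincreasing in n, for any t ∈ [0,1). -/
open scoped NNReal BigOperators

/-!
Pascal's rule splits the output at level `n + 1` as `t` times the output at level `n` plus `1 - t`
times the output at level `n` of the shifted input `k ↦ r (k + 1)`. Hence the drop
`q n - q (n + 1)` is `1 - t` times the output at level `n` of the input's drops `r k - r (k + 1)`,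
which is nonnegative because the kernel is, once `r` is nonincreasing.
-/

open Finset

namespace Amplifier

noncomputable def pushforward (a : ℕ → ℝ) (t : ℝ) (n : ℕ) : ℝ :=
  ∑ k ∈ range (n + 1), a k * (n.choose (n - k) : ℝ) * t ^ (n - k) * (1 - t) ^ (k + 1)

variable (a b : ℕ → ℝ) (t : ℝ)

/-- Indexing by `(n - k, k) ∈ antidiagonal n` removes the truncated subtraction. -/
theorem pushforward_eq_sum_antidiagonal (n : ℕ) :
    pushforward a t n =
      ∑ ij ∈ antidiagonal n, (n.choose ij.1 : ℝ) * (a ij.2 * t ^ ij.1 * (1 - t) ^ (ij.2 + 1)) := by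
  rw [← Nat.sum_antidiagonal_swap]
  simp only [Prod.fst_swap, Prod.snd_swap]
  rw [Nat.sum_antidiagonal_eq_sum_range_succ
    (fun k j => (n.choose j : ℝ) * (a k * t ^ j * (1 - t) ^ (k + 1)))]
  exact sum_congr rfl fun k _ => by ring

theorem pushforward_succ (n : ℕ) :
    pushforward a t (n + 1) =
      t * pushforward a t n + (1 - t) * pushforward (fun k => a (k + 1)) t n := by
  simp only [pushforward_eq_sum_antidiagonal, mul_sum]
  rw [sum_antidiagonal_choose_succ_mul (fun i j => a j * t ^ i * (1 - t) ^ (j + 1)), add_comm]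
  congr 1
  · refine sum_congr rfl fun ij hij => ?_
    rw [Nat.choose_symm_of_eq_add (mem_antidiagonal.mp hij).symm]
    ring
  · exact sum_congr rfl fun ij _ => by ring

theorem pushforward_sub (n : ℕ) :
    pushforward (fun k => a k - b k) t n = pushforward a t n - pushforward b t n := by
  simp only [pushforward, ← sum_sub_distrib]
  exact sum_congr rfl fun k _ => by ring

theorem pushforward_sub_succ (n : ℕ) :
    pushforward a t n - pushforward a t (n + 1) =
      (1 - t) * pushforward (fun k => a k - a (k + 1)) t n := by
  rw [pushforward_succ, pushforward_sub]
  ring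

variable {a t}

theorem pushforward_nonneg (ha : ∀ k, 0 ≤ a k) (ht0 : 0 ≤ t) (ht1 : t ≤ 1) (n : ℕ) :
    0 ≤ pushforward a t n :=
  have : 0 ≤ 1 - t := sub_nonneg.mpr ht1
  sum_nonneg fun k _ => by have := ha k; positivity

theorem pushforward_antitone (ha : Antitone a) (ht0 : 0 ≤ t) (ht1 : t ≤ 1) :
    Antitone (pushforward a t) := by
  refine antitone_nat_of_succ_le fun n => sub_nonneg.mp ?_
  rw [pushforward_sub_succ]
  exact mul_nonneg (sub_nonneg.mpr ht1)
    (pushforward_nonneg (fun k => sub_nonneg.mpr (ha k.le_succ)) ht0 ht1 n)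

end Amplifier

theorem amplifier_passive_preserving_general
    (t : ℝ) (ht0 : 0 ≤ t) (ht1 : t < 1)
    (r : ℕ → ℝ≥0)
    (hmono : ∀ k : ℕ, r (k + 1) ≤ r k) :
    ∀ n : ℕ,
      ∑ k ∈ Finset.range (n + 2), (r k : ℝ) * ((n + 1).choose (n + 1 - k)) * t ^ (n + 1 - k) * (1 - t) ^ (k + 1)
        ≤ ∑ k ∈ Finset.range (n + 1), (r k : ℝ) * (n.choose (n - k)) * t ^ (n - k) * (1 - t) ^ (k + 1) := by
  have hr : Antitone fun k => (r k : ℝ) :=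
    antitone_nat_of_succ_le fun k => NNReal.coe_le_coe.mpr (hmono k)
  exact fun n => Amplifier.pushforward_antitone hr ht0 ht1.le n.le_succ

theorem amplifier_passive_preserving
    (t : ℝ) (ht0 : 0 ≤ t) (ht1 : t < 1)
    (N : ℕ) (r : ℕ → ℝ≥0)
    (hmono : ∀ k : ℕ, r (k + 1) ≤ r k)
    (hrN : ∀ i, N < i → r i = 0)
    (hr1 : ∑ i ∈ Finset.range (N + 1), r i = 1) :
    ∀ n : ℕ,
      ∑ k ∈ Finset.range (n + 2), (r k : ℝ) * ((n + 1).choose (n + 1 - k)) * t ^ (n + 1 - k) * (1 - t) ^ (k + 1)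
        ≤ ∑ k ∈ Finset.range (n + 1), (r k : ℝ) * (n.choose (n - k)) * t ^ (n - k) * (1 - t) ^ (k + 1) :=
  amplifier_passive_preserving_general t ht0 ht1 r hmono
end

section
/- Majorization preservation over passive states for ladder kernels: let P be a row-stochastic kernel on ℕ (finitely supported rows) satisfying both (a) the ladder condition ∀ k, n: Σ_{j=0}^n P(k,j) ≥ Σ_{j=0}^n P(k+1,j), and (b) passivity preservation (it maps nonincreasing finitely supported distributions to nonincreasing distributions). Then for any two nonincreasing finitely supported probability distributions r, s with r majorizing s (∀ n, Σ_{i=0}^n r_i ≥ Σ_{i=0}^n s_i), the pushed-forward distributions rP and sP are both nonincreasing and rP majorizes sP. -/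
/-!
The first two claims are passivity preservation applied to `r` and `s`. For the third, the `n`-th
partial sum of `uP` is `∑ i, u i * F i` with `F i = ∑ j ≤ n, P (i, j)`, which is nonnegative and,
by the ladder condition, nonincreasing in `i`. Summation by parts writes `∑ i, u i * F i` as a
combination of the partial sums of `u` with the nonnegative weights `F i - F (i + 1)` and the last
value of `F`, so the domination of the partial sums of `s` by those of `r` carries over.
-/

open Finset
open scoped NNReal

theorem sum_range_mul_le_sum_range_mul_of_antitone {R : Type*} [CommRing R] [LinearOrder R]
    [IsOrderedRing R] {a b F : ℕ → R} (hF : Antitone F) (hF0 : ∀ i, 0 ≤ F i)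
    (hab : ∀ n, ∑ i ∈ range n, b i ≤ ∑ i ∈ range n, a i) (N : ℕ) :
    ∑ i ∈ range N, b i * F i ≤ ∑ i ∈ range N, a i * F i := by
  simp only [mul_comm (b _), mul_comm (a _)]
  have by_parts (g : ℕ → R) := sum_range_by_parts F g N
  simp only [smul_eq_mul] at by_parts
  rw [by_parts, by_parts]
  refine sub_le_sub (mul_le_mul_of_nonneg_left (hab N) (hF0 _)) (sum_le_sum fun i _ => ?_)
  exact mul_le_mul_of_nonpos_left (hab _) (sub_nonpos.2 (hF i.le_succ))

theorem tsum_mul_eq_sum_range {α : Type*} [NonUnitalNonAssocSemiring α] [TopologicalSpace α]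
    {u : ℕ → α} {N : ℕ} (hu : ∀ i, N < i → u i = 0) (f : ℕ → α) :
    ∑' i, u i * f i = ∑ i ∈ range (N + 1), u i * f i :=
  tsum_eq_sum fun i hi => by rw [hu i (by simpa using hi), zero_mul]

theorem sum_range_tsum_mul_eq_sum_range_mul_sum {α : Type*} [NonUnitalNonAssocSemiring α]
    [TopologicalSpace α] {u : ℕ → α} {N : ℕ} (hu : ∀ i, N < i → u i = 0) (P : ℕ × ℕ → α)
    (n : ℕ) :
    ∑ j ∈ range n, ∑' i, u i * P (i, j) = ∑ i ∈ range (N + 1), u i * ∑ j ∈ range n, P (i, j) := by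
  simp_rw [tsum_mul_eq_sum_range hu, mul_sum]
  exact sum_comm

theorem sum_range_tsum_mul_le_of_ladder (P : ℕ × ℕ → ℝ≥0)
    (hladder : ∀ k n : ℕ,
      ∑ j ∈ range (n + 1), P (k + 1, j) ≤ ∑ j ∈ range (n + 1), P (k, j))
    {r s : ℕ → ℝ≥0} (hrfin : ∃ M, ∀ i, M < i → r i = 0) (hsfin : ∃ M, ∀ i, M < i → s i = 0)
    (hmaj : ∀ n : ℕ, ∑ i ∈ range (n + 1), s i ≤ ∑ i ∈ range (n + 1), r i) (n : ℕ) :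
    ∑ j ∈ range (n + 1), ∑' i, s i * P (i, j) ≤ ∑ j ∈ range (n + 1), ∑' i, r i * P (i, j) := by
  obtain ⟨Mr, hMr⟩ := hrfin
  obtain ⟨Ms, hMs⟩ := hsfin
  have hr : ∀ i, max Mr Ms < i → r i = 0 := fun i hi =>
    hMr i ((le_max_left _ _).trans_lt hi)
  have hs : ∀ i, max Mr Ms < i → s i = 0 := fun i hi =>
    hMs i ((le_max_right _ _).trans_lt hi)
  rw [sum_range_tsum_mul_eq_sum_range_mul_sum hs, sum_range_tsum_mul_eq_sum_range_mul_sum hr,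
    ← NNReal.coe_le_coe]
  push_cast
  refine sum_range_mul_le_sum_range_mul_of_antitone ?_ (fun i => by positivity) ?_ _
  · exact antitone_nat_of_succ_le fun k => by exact_mod_cast hladder k n
  · rintro (_ | m)
    · simp
    · exact_mod_cast hmaj m

theorem majorization_preservation_passive_general
    (P : ℕ × ℕ → ℝ≥0)
    (hladder : ∀ k n : ℕ,
      ∑ j ∈ Finset.range (n + 1), P (k + 1, j) ≤ ∑ j ∈ Finset.range (n + 1), P (k, j))
    (hpassive : ∀ (u : ℕ → ℝ≥0), (∀ k, u (k + 1) ≤ u k) → (∃ M, ∀ i, M < i → u i = 0) →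
      (∑' i, u i = 1) → ∀ k : ℕ, (∑' i : ℕ, u i * P (i, k + 1)) ≤ ∑' i : ℕ, u i * P (i, k))
    (r s : ℕ → ℝ≥0)
    (hrmono : ∀ k, r (k + 1) ≤ r k) (hsmono : ∀ k, s (k + 1) ≤ s k)
    (hrfin : ∃ M, ∀ i, M < i → r i = 0) (hsfin : ∃ M, ∀ i, M < i → s i = 0)
    (hr1 : ∑' i, r i = 1) (hs1 : ∑' i, s i = 1)
    (hmaj : ∀ n : ℕ, ∑ i ∈ Finset.range (n + 1), s i ≤ ∑ i ∈ Finset.range (n + 1), r i) :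
    (∀ k : ℕ, (∑' i : ℕ, r i * P (i, k + 1)) ≤ ∑' i : ℕ, r i * P (i, k)) ∧
    (∀ k : ℕ, (∑' i : ℕ, s i * P (i, k + 1)) ≤ ∑' i : ℕ, s i * P (i, k)) ∧
    (∀ n : ℕ,
      ∑ j ∈ Finset.range (n + 1), (∑' i : ℕ, s i * P (i, j))
        ≤ ∑ j ∈ Finset.range (n + 1), (∑' i : ℕ, r i * P (i, j))) :=
  ⟨hpassive r hrmono hrfin hr1, hpassive s hsmono hsfin hs1,
    sum_range_tsum_mul_le_of_ladder P hladder hrfin hsfin hmaj⟩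

theorem majorization_preservation_passive
    (P : ℕ × ℕ → ℝ≥0)
    (hrow_fin : ∀ i : ℕ, ∃ M : ℕ, ∀ j, M < j → P (i, j) = 0)
    (hrow_sum : ∀ i : ℕ, ∑' j : ℕ, P (i, j) = 1)
    (hladder : ∀ k n : ℕ,
      ∑ j ∈ Finset.range (n + 1), P (k + 1, j) ≤ ∑ j ∈ Finset.range (n + 1), P (k, j))
    (hpassive : ∀ (u : ℕ → ℝ≥0), (∀ k, u (k + 1) ≤ u k) → (∃ M, ∀ i, M < i → u i = 0) →
      (∑' i, u i = 1) → ∀ k : ℕ, (∑' i : ℕ, u i * P (i, k + 1)) ≤ ∑' i : ℕ, u i * P (i, k))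
    (r s : ℕ → ℝ≥0)
    (hrmono : ∀ k, r (k + 1) ≤ r k) (hsmono : ∀ k, s (k + 1) ≤ s k)
    (hrfin : ∃ M, ∀ i, M < i → r i = 0) (hsfin : ∃ M, ∀ i, M < i → s i = 0)
    (hr1 : ∑' i, r i = 1) (hs1 : ∑' i, s i = 1)
    (hmaj : ∀ n : ℕ, ∑ i ∈ Finset.range (n + 1), s i ≤ ∑ i ∈ Finset.range (n + 1), r i) :
    (∀ k : ℕ, (∑' i : ℕ, r i * P (i, k + 1)) ≤ ∑' i : ℕ, r i * P (i, k)) ∧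
    (∀ k : ℕ, (∑' i : ℕ, s i * P (i, k + 1)) ≤ ∑' i : ℕ, s i * P (i, k)) ∧
    (∀ n : ℕ,
      ∑ j ∈ Finset.range (n + 1), (∑' i : ℕ, s i * P (i, j))
        ≤ ∑ j ∈ Finset.range (n + 1), (∑' i : ℕ, r i * P (i, j))) :=
  majorization_preservation_passive_general P hladder hpassive r s hrmono hsmono hrfin hsfin hr1 hs1
    hmaj
end
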